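/- Monotonicity of optimal latency in the broadcast block set: for a finite set S of broadcast blocks with channel gains H_j > 0 and Q, B, N_0, E > 0, let V(S) be the infimum of Σ_{j∈S} T_j over reals T_j > 0, p_j > 0 satisfying Q ≤ T_j·B·log₂(1 + p_jH_j/N_0) for each j ∈ S and Σ_{j∈S} T_j·p_j ≤ E (with V(∅) = 0 and V(S) = +∞ if no feasible point exists). Then S ⊆ S' implies V(S) ≤ V(S'); moreover, if S ⊊ S' and E > (Q·N_0·ln 2/B)·Σ_{j∈S'} 1/H_j (so that S' is feasible), then V(S) < V(S'). -/

import Mathlib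

/-- Feasibility for the broadcast power-control problem (P3.1) restricted to the
block set `S`: all latencies and powers are positive, every block is delivered,
and the total energy budget is respected. -/
def PCFeasible {ι : Type*} (S : Finset ι) (H : ι → ℝ) (Q B N0 E : ℝ)
    (T p : ι → ℝ) : Prop :=
  (∀ j ∈ S, 0 < T j) ∧ (∀ j ∈ S, 0 < p j) ∧
  (∀ j ∈ S, Q ≤ T j * (B * Real.logb 2 (1 + p j * H j / N0))) ∧
  ∑ j ∈ S, T j * p j ≤ E

/-- The optimal (infimum) total downloading latency `V(S)` for the broadcast block
set `S`, valued in `EReal` so that `V(S) = +∞` when no feasible point exists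
(and `V(∅) = 0`). -/
noncomputable def V {ι : Type*} (H : ι → ℝ) (Q B N0 E : ℝ) (S : Finset ι) : EReal :=
  sInf {v : EReal | ∃ T p : ι → ℝ,
    PCFeasible S H Q B N0 E T p ∧ v = ((∑ j ∈ S, T j : ℝ) : EReal)}


lemma log_one_add_le_two_sqrt {x : ℝ} (hx : 0 ≤ x) :
    Real.log (1 + x) ≤ 2 * Real.sqrt x := by
  have h1 : Real.sqrt (1 + x) ≤ 1 + Real.sqrt x := by
    have : (1 : ℝ) + Real.sqrt x = Real.sqrt ((1 + Real.sqrt x) ^ 2) :=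
      (Real.sqrt_sq (by positivity)).symm
    rw [this]
    apply Real.sqrt_le_sqrt
    nlinarith [Real.sq_sqrt hx, Real.sqrt_nonneg x]
  have h2 : Real.log (1 + x) = 2 * Real.log (Real.sqrt (1 + x)) := by
    rw [Real.log_sqrt (by linarith)]; ring
  have h3 : Real.log (Real.sqrt (1 + x)) ≤ Real.sqrt (1 + x) - 1 :=
    Real.log_le_sub_one_of_pos (Real.sqrt_pos.mpr (by linarith))
  nlinarith [Real.sqrt_nonneg x]

lemma div_le_log_one_add {t : ℝ} (ht : 0 < t) : t / (1 + t) ≤ Real.log (1 + t) := by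
  have h1t : (0:ℝ) < 1 + t := by linarith
  have h := Real.log_le_sub_one_of_pos (x := (1 + t)⁻¹) (by positivity)
  rw [Real.log_inv] at h
  have hinv : (1 + t)⁻¹ = 1 - t / (1 + t) := by field_simp; ring
  rw [hinv] at h
  linarith

lemma feas_exists {ι : Type*} (S : Finset ι) (H : ι → ℝ) (hH : ∀ j, 0 < H j)
    (Q B N0 E : ℝ) (hQ : 0 < Q) (hB : 0 < B) (hN0 : 0 < N0)
    (hE : (Q * N0 * Real.log 2 / B) * ∑ j ∈ S, 1 / H j < E) :
    ∃ T q : ι → ℝ, PCFeasible S H Q B N0 E T q := by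
  have hlog2 : (0:ℝ) < Real.log 2 := Real.log_pos (by norm_num)
  set ε : ℝ := E - (Q * N0 * Real.log 2 / B) * ∑ j ∈ S, 1 / H j with hε
  have hεpos : 0 < ε := by simpa [hε] using sub_pos.mpr hE
  set P : ℝ := ε * B / ((S.card + 1) * Q * Real.log 2) with hP
  have hPpos : 0 < P := by rw [hP]; positivity
  clear_value ε P
  refine ⟨fun j => Q / (B * Real.logb 2 (1 + P * H j / N0)), fun _ => P, ?_, ?_, ?_, ?_⟩
  · intro j hj
    have hx : 0 < P * H j / N0 := by have := hH j; positivity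
    have : 0 < Real.logb 2 (1 + P * H j / N0) :=
      Real.logb_pos (by norm_num) (by linarith)
    positivity
  · intro j hj; exact hPpos
  · intro j hj
    have hx : 0 < P * H j / N0 := by have := hH j; positivity
    have hlb : 0 < Real.logb 2 (1 + P * H j / N0) :=
      Real.logb_pos (by norm_num) (by linarith)
    rw [div_mul_cancel₀]
    · positivity
  · -- energy bound
    have key : ∀ j ∈ S, (Q / (B * Real.logb 2 (1 + P * H j / N0))) * P
        ≤ Q * N0 * Real.log 2 / B * (1 / H j) + ε / (S.card + 1) := by
      intro j hj
      have hHj := hH j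
      set a : ℝ := N0 / H j with ha
      have hapos : 0 < a := by rw [ha]; positivity
      have hxa : P * H j / N0 = P / a := by rw [ha]; field_simp
      have hL : P / (a + P) ≤ Real.log (1 + P / a) := by
        have h := div_le_log_one_add (t := P / a) (by positivity)
        have heq : P / a / (1 + P / a) = P / (a + P) := by
          rw [div_div]
          congr 1
          field_simp
        rw [heq] at h; exact h
      clear_value a
      set L := Real.log (1 + P / a) with hLdef
      have hLpos : 0 < L := lt_of_lt_of_le (by positivity) hL
      clear_value L
      have key1 : P / L ≤ a + P := by
        rw [div_le_iff₀ hLpos]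
        have h2 : (a + P) * (P / (a + P)) ≤ (a + P) * L :=
          mul_le_mul_of_nonneg_left hL (by positivity)
        have h3 : (a + P) * (P / (a + P)) = P := by field_simp
        nlinarith
      have hlhs : Q / (B * Real.logb 2 (1 + P * H j / N0)) * P
          = Q * Real.log 2 / B * (P / L) := by
        rw [hxa, Real.logb, hLdef]
        field_simp
      rw [hlhs]
      calc Q * Real.log 2 / B * (P / L) ≤ Q * Real.log 2 / B * (a + P) :=
            mul_le_mul_of_nonneg_left key1 (by positivity)
        _ = Q * N0 * Real.log 2 / B * (1 / H j) + ε / (S.card + 1) := by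
            rw [ha, hP]
            have hc : ((S.card : ℝ) + 1) ≠ 0 := by positivity
            field_simp
    calc ∑ j ∈ S, (Q / (B * Real.logb 2 (1 + P * H j / N0))) * P
        ≤ ∑ j ∈ S, (Q * N0 * Real.log 2 / B * (1 / H j) + ε / (S.card + 1)) :=
          Finset.sum_le_sum key
      _ = Q * N0 * Real.log 2 / B * ∑ j ∈ S, 1 / H j
          + (S.card : ℝ) * (ε / (S.card + 1)) := by
          rw [Finset.sum_add_distrib, ← Finset.mul_sum, Finset.sum_const, nsmul_eq_mul]
      _ ≤ E := by
          have h4 : (S.card : ℝ) * (ε / (S.card + 1)) ≤ ((S.card : ℝ) + 1) * (ε / (S.card + 1)) :=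
            mul_le_mul_of_nonneg_right (by linarith) (le_of_lt (by positivity))
          have h5 : ((S.card : ℝ) + 1) * (ε / (S.card + 1)) = ε := by field_simp
          have h6 : Q * N0 * Real.log 2 / B * ∑ j ∈ S, 1 / H j = E - ε := by
            rw [hε]; ring
          linarith

lemma T_lower {T P H Q B N0 E : ℝ} (hH : 0 < H) (hQ : 0 < Q) (hB : 0 < B)
    (hN0 : 0 < N0) (hE : 0 < E) (hT : 0 < T) (hp : 0 < P)
    (hrate : Q ≤ T * (B * Real.logb 2 (1 + P * H / N0))) (hen : T * P ≤ E) :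
    (Q * Real.log 2 / (2 * B)) ^ 2 * (N0 / (E * H)) ≤ T := by
  have hlog2 : (0:ℝ) < Real.log 2 := Real.log_pos (by norm_num)
  set x : ℝ := P * H / N0 with hx
  have hxpos : 0 < x := by rw [hx]; positivity
  have hlb : Real.logb 2 (1 + x) ≤ 2 * Real.sqrt x / Real.log 2 := by
    rw [Real.logb]
    exact (div_le_div_iff_of_pos_right hlog2).mpr (log_one_add_le_two_sqrt hxpos.le)
  have h1 : Q ≤ T * (B * (2 * Real.sqrt x / Real.log 2)) := by
    refine hrate.trans (mul_le_mul_of_nonneg_left ?_ hT.le)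
    exact mul_le_mul_of_nonneg_left hlb hB.le
  -- T * sqrt x = sqrt (T^2 * x) ≤ sqrt (T * E * H / N0)
  have h2 : T * Real.sqrt x ≤ Real.sqrt (T * E * H / N0) := by
    have : T * Real.sqrt x = Real.sqrt (T ^ 2 * x) := by
      rw [Real.sqrt_mul (by positivity), Real.sqrt_sq hT.le]
    rw [this]
    apply Real.sqrt_le_sqrt
    rw [hx]
    have : T ^ 2 * (P * H / N0) = (T * P) * (T * H / N0) := by ring
    rw [this]
    have h3 : T * E * H / N0 = E * (T * H / N0) := by ring
    rw [h3]
    exact mul_le_mul_of_nonneg_right hen (by positivity)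
  have h1' : Q * Real.log 2 ≤ 2 * B * (T * Real.sqrt x) := by
    have h := mul_le_mul_of_nonneg_right h1 hlog2.le
    have heq : T * (B * (2 * Real.sqrt x / Real.log 2)) * Real.log 2
        = 2 * B * (T * Real.sqrt x) := by field_simp
    rw [heq] at h; exact h
  have h4 : Q * Real.log 2 / (2 * B) ≤ Real.sqrt (T * E * H / N0) := by
    rw [div_le_iff₀ (by positivity)]
    nlinarith [mul_le_mul_of_nonneg_left h2 (show (0:ℝ) ≤ 2 * B by positivity)]
  have h5 : (Q * Real.log 2 / (2 * B)) ^ 2 ≤ T * E * H / N0 := by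
    calc (Q * Real.log 2 / (2 * B)) ^ 2 ≤ Real.sqrt (T * E * H / N0) ^ 2 :=
          pow_le_pow_left₀ (by positivity) h4 2
      _ = T * E * H / N0 := Real.sq_sqrt (by positivity)
  have h6 := mul_le_mul_of_nonneg_right h5 (show (0:ℝ) ≤ N0 / (E * H) by positivity)
  have h7 : T * E * H / N0 * (N0 / (E * H)) = T := by field_simp
  rw [h7] at h6; exact h6

lemma PCFeasible.mono {ι : Type*} {S S' : Finset ι} {H : ι → ℝ} {Q B N0 E : ℝ}
    {T p : ι → ℝ} (h : PCFeasible S' H Q B N0 E T p) (hsub : S ⊆ S') :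
    PCFeasible S H Q B N0 E T p := by
  obtain ⟨hT, hp, hr, he⟩ := h
  exact ⟨fun j hj => hT j (hsub hj), fun j hj => hp j (hsub hj),
    fun j hj => hr j (hsub hj),
    le_trans (Finset.sum_le_sum_of_subset_of_nonneg hsub
      (fun j hj _ => le_of_lt (mul_pos (hT j hj) (hp j hj)))) he⟩

/-- **Monotonicity of optimal latency in the broadcast block set.**
`S ⊆ S'` implies `V(S) ≤ V(S')`; moreover, if `S ⊊ S'` and
`E > (Q * N0 * ln 2 / B) * Σ_{j∈S'} 1 / H j` (so that `S'` is feasible), then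
`V(S) < V(S')`. -/
theorem V_monotone {ι : Type*} (H : ι → ℝ) (hH : ∀ j, 0 < H j)
    (Q B N0 E : ℝ) (hQ : 0 < Q) (hB : 0 < B) (hN0 : 0 < N0) (hE : 0 < E)
    (S S' : Finset ι) :
    (S ⊆ S' → V H Q B N0 E S ≤ V H Q B N0 E S') ∧
    (S ⊂ S' → (Q * N0 * Real.log 2 / B) * ∑ j ∈ S', 1 / H j < E →
      V H Q B N0 E S < V H Q B N0 E S') := by
  classical
  constructor
  · intro hsub
    apply le_sInf
    rintro v ⟨T, p, hfeas, rfl⟩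
    refine le_trans (sInf_le ⟨T, p, hfeas.mono hsub, rfl⟩) ?_
    exact EReal.coe_le_coe_iff.mpr
      (Finset.sum_le_sum_of_subset_of_nonneg hsub fun j hj _ => (hfeas.1 j hj).le)
  · intro hss hE'
    have hsub := hss.subset
    have hfeasS : ∃ T p, PCFeasible S H Q B N0 E T p := by
      apply feas_exists S H hH Q B N0 E hQ hB hN0
      refine lt_of_le_of_lt ?_ hE'
      have hlog2 : (0:ℝ) < Real.log 2 := Real.log_pos (by norm_num)
      refine mul_le_mul_of_nonneg_left
        (Finset.sum_le_sum_of_subset_of_nonneg hsub fun j hj _ => by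
          have := hH j; positivity) (by positivity)
    obtain ⟨T0, p0, hf0⟩ := hfeasS
    have hVle : V H Q B N0 E S ≤ ((∑ j ∈ S, T0 j : ℝ) : EReal) :=
      sInf_le ⟨T0, p0, hf0, rfl⟩
    have hV0 : (0 : EReal) ≤ V H Q B N0 E S := by
      apply le_sInf
      rintro v ⟨T, p, hf, rfl⟩
      exact_mod_cast Finset.sum_nonneg fun j hj => (hf.1 j hj).le
    have hne_top : V H Q B N0 E S ≠ ⊤ := ne_top_of_le_ne_top (EReal.coe_ne_top _) hVle
    have hne_bot : V H Q B N0 E S ≠ ⊥ := by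
      intro hbot; rw [hbot] at hV0; simp at hV0
    set x : ℝ := (V H Q B N0 E S).toReal with hxdef
    have hx : V H Q B N0 E S = (x : EReal) := (EReal.coe_toReal hne_top hne_bot).symm
    obtain ⟨j0, hj0', hj0⟩ := Finset.exists_of_ssubset hss
    set δ : ℝ := (Q * Real.log 2 / (2 * B)) ^ 2 * (N0 / (E * H j0)) with hδ
    have hδpos : 0 < δ := by
      have := hH j0
      have hlog2 : (0:ℝ) < Real.log 2 := Real.log_pos (by norm_num)
      rw [hδ]; positivity
    have hkey : ((x + δ : ℝ) : EReal) ≤ V H Q B N0 E S' := by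
      apply le_sInf
      rintro v ⟨T, p, hf, rfl⟩
      have hfS := hf.mono hsub
      have h1 : (x : EReal) ≤ ((∑ j ∈ S, T j : ℝ) : EReal) :=
        hx ▸ sInf_le ⟨T, p, hfS, rfl⟩
      have h1' : x ≤ ∑ j ∈ S, T j := EReal.coe_le_coe_iff.mp h1
      have hTp_le_E : T j0 * p j0 ≤ E :=
        le_trans (Finset.single_le_sum
          (fun j hj => (mul_pos (hf.1 j hj) (hf.2.1 j hj)).le) hj0') hf.2.2.2
      have hδle : δ ≤ T j0 :=
        T_lower (hH j0) hQ hB hN0 hE (hf.1 j0 hj0') (hf.2.1 j0 hj0')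
          (hf.2.2.1 j0 hj0') hTp_le_E
      have h2 : δ ≤ ∑ j ∈ S' \ S, T j :=
        le_trans hδle (Finset.single_le_sum
          (fun j hj => (hf.1 j (Finset.sdiff_subset hj)).le)
          (Finset.mem_sdiff.mpr ⟨hj0', hj0⟩))
      have hsd := Finset.sum_sdiff (f := T) hsub
      exact EReal.coe_le_coe_iff.mpr (by linarith)
    calc V H Q B N0 E S = ((x : ℝ) : EReal) := hx
      _ < ((x + δ : ℝ) : EReal) := EReal.coe_lt_coe_iff.mpr (by linarith)
      _ ≤ V H Q B N0 E S' := hkey
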